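/- Let δ and M be real numbers with 0 < δ < 1 and M > 0. Then ∫_0^∞ (1 − (1 + t)^{−M}) t^{−δ−1} dt = Γ(1 − δ) · Γ(M + δ) / (δ · Γ(M)), where Γ denotes the Gamma function. -/

import Mathlib

open MeasureTheory Real
open Set Filter

lemma realBeta (a b : ℝ) (ha : 0 < a) (hb : 0 < b) :
    ∫ x in Set.Ioo (0:ℝ) 1, x ^ (a-1) * (1-x) ^ (b-1)
      = Real.Gamma a * Real.Gamma b / Real.Gamma (a+b) := by
  have hc := Complex.Gamma_mul_Gamma_eq_betaIntegral (s := (a:ℂ)) (t := (b:ℂ))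
    (by simpa using ha) (by simpa using hb)
  have h2 : Complex.betaIntegral a b
      = ((∫ x in Set.Ioo (0:ℝ) 1, x ^ (a-1) * (1-x) ^ (b-1) : ℝ) : ℂ) := by
    rw [← MeasureTheory.integral_Ioc_eq_integral_Ioo,
      ← intervalIntegral.integral_of_le zero_le_one,
      Complex.betaIntegral, ← intervalIntegral.integral_ofReal]
    refine intervalIntegral.integral_congr fun x hx => ?_
    rw [Set.uIcc_of_le zero_le_one] at hx
    obtain ⟨h0, h1⟩ := hx
    rw [show ((a:ℂ)-1) = ((a-1:ℝ):ℂ) by push_cast; ring,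
      show ((b:ℂ)-1) = ((b-1:ℝ):ℂ) by push_cast; ring,
      show (1-(x:ℂ)) = ((1-x:ℝ):ℂ) by push_cast; ring,
      ← Complex.ofReal_cpow h0, ← Complex.ofReal_cpow (by linarith),
      Complex.ofReal_mul]
  have hΓ : Real.Gamma (a+b) ≠ 0 := (Real.Gamma_pos_of_pos (by linarith)).ne'
  rw [h2] at hc
  rw [show ((a:ℂ) + b) = ((a+b : ℝ) : ℂ) by push_cast; ring] at hc
  simp only [Complex.Gamma_ofReal] at hc
  rw [eq_div_iff hΓ]
  have := hc.symm
  rw [mul_comm] at this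
  exact_mod_cast this

lemma betaIoi (a b : ℝ) (ha : 0 < a) (hb : 0 < b) :
    ∫ t in Set.Ioi (0:ℝ), t ^ (a-1) * (1+t) ^ (-(a+b))
      = Real.Gamma a * Real.Gamma b / Real.Gamma (a+b) := by
  have himg : (fun x : ℝ => x / (1-x)) '' Set.Ioo (0:ℝ) 1 = Set.Ioi 0 := by
    ext t
    constructor
    · rintro ⟨x, ⟨hx0, hx1⟩, rfl⟩
      exact div_pos hx0 (by linarith)
    · intro ht
      rw [Set.mem_Ioi] at ht
      refine ⟨t/(1+t), ⟨div_pos ht (by linarith), ?_⟩, ?_⟩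
      · rw [div_lt_one (by linarith)]; linarith
      · have h1 : (1:ℝ) + t ≠ 0 := by positivity
        field_simp
        ring
  have hderiv : ∀ x ∈ Set.Ioo (0:ℝ) 1,
      HasDerivWithinAt (fun x : ℝ => x / (1-x)) (((1-x)^2)⁻¹) (Set.Ioo 0 1) x := by
    intro x ⟨hx0, hx1⟩
    have h1x : (1:ℝ) - x ≠ 0 := by intro h; linarith [h]
    have := (hasDerivAt_id x).div ((hasDerivAt_const x (1:ℝ)).sub (hasDerivAt_id x)) h1x
    exact (this.congr_deriv (by simp only [Pi.sub_apply, id]; field_simp; ring)).hasDerivWithinAt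
  have hinj : Set.InjOn (fun x : ℝ => x / (1-x)) (Set.Ioo 0 1) := by
    rintro x ⟨hx0, hx1⟩ y ⟨hy0, hy1⟩ h
    simp only at h
    have hx : (1:ℝ) - x ≠ 0 := by intro hh; linarith
    have hy : (1:ℝ) - y ≠ 0 := by intro hh; linarith
    field_simp at h
    nlinarith [h]
  rw [← himg, MeasureTheory.integral_image_eq_integral_abs_deriv_smul measurableSet_Ioo hderiv hinj]
  rw [← realBeta a b ha hb]
  refine MeasureTheory.setIntegral_congr_fun measurableSet_Ioo fun x ⟨hx0, hx1⟩ => ?_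
  have h1x : (0:ℝ) < 1 - x := by linarith
  have hfrac : 1 + x / (1-x) = (1-x)⁻¹ := by field_simp; ring
  rw [smul_eq_mul, hfrac, Real.div_rpow hx0.le h1x.le, Real.inv_rpow h1x.le,
    ← Real.rpow_neg h1x.le, abs_of_pos (by positivity)]
  rw [div_eq_mul_inv, ← Real.rpow_neg h1x.le, show ((1-x)^2)⁻¹ = (1-x) ^ (-2 : ℝ) by
    rw [← Real.rpow_two, ← Real.rpow_neg h1x.le]]
  rw [show (1-x) ^ (-2:ℝ) * (x ^ (a-1) * (1-x) ^ (-(a-1)) * (1-x) ^ (-(-(a+b))))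
      = x ^ (a-1) * ((1-x) ^ (-2:ℝ) * (1-x) ^ (-(a-1)) * (1-x) ^ (-(-(a+b)))) by ring,
    ← Real.rpow_add h1x, ← Real.rpow_add h1x]
  congr 1
  congr 1
  ring

/-- Beta-type integral identity:
`∫₀^∞ (1 − (1 + t)^{−M}) t^{−δ−1} dt = Γ(1 − δ) Γ(M + δ) / (δ Γ(M))` for `0 < δ < 1`,
`M > 0`. -/
theorem beta_type_integral
    (δ M : ℝ) (hδ0 : 0 < δ) (hδ1 : δ < 1) (hM : 0 < M) :
    ∫ t in Set.Ioi (0 : ℝ), (1 - (1 + t) ^ (-M)) * t ^ (-δ - 1)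
      = Real.Gamma (1 - δ) * Real.Gamma (M + δ) / (δ * Real.Gamma M) := by
  set u : ℝ → ℝ := fun t => 1 - (1 + t) ^ (-M) with hu_def
  set u' : ℝ → ℝ := fun t => M * (1 + t) ^ (-M - 1) with hu'_def
  set v : ℝ → ℝ := fun t => -(t ^ (-δ) / δ) with hv_def
  set v' : ℝ → ℝ := fun t => t ^ (-δ - 1) with hv'_def
  -- pointwise key bound : 1 - (1+t)^(-M) ≤ M * t for t ≥ 0, and ∈ [0,1]
  have key : ∀ t : ℝ, 0 < t → u t ≤ M * t := by
    intro t ht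
    have h1t : (0:ℝ) < 1 + t := by linarith
    have hlog : Real.log ((1+t) ^ (-M)) ≤ (1+t) ^ (-M) - 1 :=
      Real.log_le_sub_one_of_pos (Real.rpow_pos_of_pos h1t _)
    rw [Real.log_rpow h1t] at hlog
    have hlog2 : Real.log (1+t) ≤ t := by
      have := Real.log_le_sub_one_of_pos h1t; linarith
    have : -M * Real.log (1+t) ≤ (1+t) ^ (-M) - 1 := by
      calc -M * Real.log (1+t) = -(M * Real.log (1+t)) := by ring
      _ ≤ (1+t) ^ (-M) - 1 := by linarith [hlog]
    have h5 : M * Real.log (1+t) ≤ M * t := mul_le_mul_of_nonneg_left hlog2 hM.le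
    simp only [hu_def]
    linarith
  have hu01 : ∀ t : ℝ, 0 < t → 0 ≤ u t ∧ u t ≤ 1 := by
    intro t ht
    have h1t : (1:ℝ) ≤ 1 + t := by linarith
    constructor
    · have : (1+t) ^ (-M) ≤ 1 :=
        Real.rpow_le_one_of_one_le_of_nonpos h1t (by linarith)
      simp only [hu_def]; linarith
    · have : 0 ≤ (1+t) ^ (-M) := Real.rpow_nonneg (by linarith) _
      simp only [hu_def]; linarith
  -- derivatives
  have hu : ∀ x ∈ Set.Ioi (0:ℝ), HasDerivAt u (u' x) x := by
    intro x hx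
    have hx0 : (0:ℝ) < x := hx
    have h1x : (0:ℝ) < 1 + x := by linarith
    have h1 : HasDerivAt (fun t : ℝ => 1 + t) 1 x := by
      simpa using (hasDerivAt_id x).const_add 1
    have h2 : HasDerivAt (fun y : ℝ => y ^ (-M)) (-M * (1+x) ^ (-M - 1)) (1+x) :=
      Real.hasDerivAt_rpow_const (Or.inl h1x.ne')
    have h3 := (h2.comp x h1)
    have h4 : HasDerivAt (fun t : ℝ => (1+t) ^ (-M)) (-M * (1+x) ^ (-M-1)) x := by
      exact h3.congr_deriv (by ring)
    have := (hasDerivAt_const x (1:ℝ)).sub h4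
    exact this.congr_deriv (by simp only [hu'_def]; ring)
  have hv : ∀ x ∈ Set.Ioi (0:ℝ), HasDerivAt v (v' x) x := by
    intro x hx
    have hx0 : (0:ℝ) < x := hx
    have h2 : HasDerivAt (fun y : ℝ => y ^ (-δ)) (-δ * x ^ (-δ - 1)) x :=
      Real.hasDerivAt_rpow_const (Or.inl hx0.ne')
    have := (h2.div_const δ).neg
    refine this.congr_deriv ?_
    field_simp [hv'_def]
    rfl
  -- continuity / measurability
  have hcont_uv' : ContinuousOn (u * v') (Set.Ioi 0) := by
    intro x hx
    have hx0 : (0:ℝ) < x := hx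
    exact (((hu x hx).continuousAt.mul
      ((Real.continuousAt_rpow_const x (-δ-1) (Or.inl hx0.ne')))).continuousWithinAt)
  have hcont_u'v : ContinuousOn (u' * v) (Set.Ioi 0) := by
    intro x hx
    have hx0 : (0:ℝ) < x := hx
    have h1x : (0:ℝ) < 1 + x := by linarith
    have c1 : ContinuousAt (fun t : ℝ => M * (1+t) ^ (-M-1)) x := by
      exact continuousAt_const.mul (((Real.continuousAt_rpow_const (1+x) (-M-1)
        (Or.inl h1x.ne')).comp (by fun_prop)))
    have c2 : ContinuousAt v x := by
      exact (((Real.continuousAt_rpow_const x (-δ) (Or.inl hx0.ne')).div_const δ).neg)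
    exact (c1.mul c2).continuousWithinAt
  -- integrability of u * v'
  have hint_rpow : ∀ r : ℝ, -1 < r → IntegrableOn (fun t : ℝ => t ^ r) (Set.Ioc (0:ℝ) 1) := by
    intro r hr
    have := intervalIntegral.intervalIntegrable_rpow' (a := (0:ℝ)) (b := 1) hr
    rwa [intervalIntegrable_iff_integrableOn_Ioc_of_le zero_le_one] at this
  have huv' : IntegrableOn (u * v') (Set.Ioi 0) := by
    rw [← Set.Ioc_union_Ioi_eq_Ioi (zero_le_one' ℝ)]
    refine MeasureTheory.IntegrableOn.union ?_ ?_
    · refine Integrable.mono' ((hint_rpow (-δ) (by linarith)).const_mul M)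
        ((hcont_uv'.mono Set.Ioc_subset_Ioi_self).aestronglyMeasurable measurableSet_Ioc) ?_
      refine (ae_restrict_iff' measurableSet_Ioc).mpr (ae_of_all _ fun t ht => ?_)
      have ht0 : (0:ℝ) < t := ht.1
      have hvnn : (0:ℝ) ≤ t ^ (-δ-1) := Real.rpow_nonneg ht0.le _
      have : ‖(u * v') t‖ = u t * t ^ (-δ-1) := by
        simp only [Pi.mul_apply, hv'_def, Real.norm_eq_abs]
        exact abs_of_nonneg (mul_nonneg (hu01 t ht0).1 hvnn)
      rw [this]
      calc u t * t ^ (-δ-1) ≤ (M * t) * t ^ (-δ-1) :=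
            mul_le_mul_of_nonneg_right (key t ht0) hvnn
        _ = M * (t ^ (1:ℝ) * t ^ (-δ-1)) := by rw [Real.rpow_one]; ring
        _ = M * t ^ (-δ) := by rw [← Real.rpow_add ht0]; norm_num
    · refine Integrable.mono' (integrableOn_Ioi_rpow_of_lt (by linarith : -δ-1 < -1) one_pos)
        ((hcont_uv'.mono (Set.Ioi_subset_Ioi zero_le_one)).aestronglyMeasurable
          measurableSet_Ioi) ?_
      refine (ae_restrict_iff' measurableSet_Ioi).mpr (ae_of_all _ fun t ht => ?_)
      have ht0 : (0:ℝ) < t := lt_trans one_pos ht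
      have hvnn : (0:ℝ) ≤ t ^ (-δ-1) := Real.rpow_nonneg ht0.le _
      have : ‖(u * v') t‖ = u t * t ^ (-δ-1) := by
        simp only [Pi.mul_apply, hv'_def, Real.norm_eq_abs]
        exact abs_of_nonneg (mul_nonneg (hu01 t ht0).1 hvnn)
      rw [this]
      calc u t * t ^ (-δ-1) ≤ 1 * t ^ (-δ-1) :=
            mul_le_mul_of_nonneg_right (hu01 t ht0).2 hvnn
        _ = t ^ (-δ-1) := one_mul _
  -- integrability of u' * v
  have habs_u'v : ∀ t : ℝ, 0 < t → ‖(u' * v) t‖ = (M/δ) * ((1+t) ^ (-M-1) * t ^ (-δ)) := by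
    intro t ht0
    have h1t : (0:ℝ) < 1 + t := by linarith
    simp only [Pi.mul_apply, hu'_def, hv_def, Real.norm_eq_abs]
    have hA : (0:ℝ) ≤ (1+t) ^ (-M-1) := Real.rpow_nonneg h1t.le _
    have hB : (0:ℝ) ≤ t ^ (-δ) := Real.rpow_nonneg ht0.le _
    rw [show M * (1+t) ^ (-M-1) * -(t ^ (-δ)/δ)
        = -(M/δ * ((1+t) ^ (-M-1) * t ^ (-δ))) by field_simp [hδ0.ne']]
    rw [abs_neg, abs_of_nonneg (by positivity)]
  have hu'v : IntegrableOn (u' * v) (Set.Ioi 0) := by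
    rw [← Set.Ioc_union_Ioi_eq_Ioi (zero_le_one' ℝ)]
    refine MeasureTheory.IntegrableOn.union ?_ ?_
    · refine Integrable.mono' ((hint_rpow (-δ) (by linarith)).const_mul (M/δ))
        ((hcont_u'v.mono Set.Ioc_subset_Ioi_self).aestronglyMeasurable measurableSet_Ioc) ?_
      refine (ae_restrict_iff' measurableSet_Ioc).mpr (ae_of_all _ fun t ht => ?_)
      have ht0 : (0:ℝ) < t := ht.1
      have h1t : (0:ℝ) < 1 + t := by linarith
      rw [habs_u'v t ht0]
      have h1 : (1+t) ^ (-M-1) ≤ 1 :=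
        Real.rpow_le_one_of_one_le_of_nonpos (by linarith) (by linarith)
      have h2 : (0:ℝ) ≤ t ^ (-δ) := Real.rpow_nonneg ht0.le _
      have : (1+t) ^ (-M-1) * t ^ (-δ) ≤ 1 * t ^ (-δ) := mul_le_mul_of_nonneg_right h1 h2
      have hMδ : (0:ℝ) ≤ M/δ := by positivity
      calc (M/δ) * ((1+t) ^ (-M-1) * t ^ (-δ)) ≤ (M/δ) * (1 * t ^ (-δ)) :=
            mul_le_mul_of_nonneg_left this hMδ
        _ = (M/δ) * t ^ (-δ) := by ring
    · refine Integrable.mono'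
        ((integrableOn_Ioi_rpow_of_lt (by linarith : -M-1-δ < -1) one_pos).const_mul (M/δ))
        ((hcont_u'v.mono (Set.Ioi_subset_Ioi zero_le_one)).aestronglyMeasurable
          measurableSet_Ioi) ?_
      refine (ae_restrict_iff' measurableSet_Ioi).mpr (ae_of_all _ fun t ht => ?_)
      have ht1 : (1:ℝ) < t := ht
      have ht0 : (0:ℝ) < t := lt_trans one_pos ht1
      have h1t : (0:ℝ) < 1 + t := by linarith
      rw [habs_u'v t ht0]
      have h1 : (1+t) ^ (-M-1) ≤ t ^ (-M-1) :=
        Real.rpow_le_rpow_of_nonpos ht0 (by linarith) (by linarith)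
      have h2 : (0:ℝ) ≤ t ^ (-δ) := Real.rpow_nonneg ht0.le _
      have hMδ : (0:ℝ) ≤ M/δ := by positivity
      calc (M/δ) * ((1+t) ^ (-M-1) * t ^ (-δ)) ≤ (M/δ) * (t ^ (-M-1) * t ^ (-δ)) :=
            mul_le_mul_of_nonneg_left (mul_le_mul_of_nonneg_right h1 h2) hMδ
        _ = (M/δ) * t ^ (-M-1-δ) := by rw [← Real.rpow_add ht0]; ring_nf
  -- boundary limits
  have habs_uv : ∀ t : ℝ, 0 < t → ‖(u * v) t‖ = u t * t ^ (-δ) / δ := by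
    intro t ht0
    simp only [Pi.mul_apply, hv_def, Real.norm_eq_abs]
    have h1 : 0 ≤ u t * (t ^ (-δ) / δ) := by
      have := (hu01 t ht0).1
      have := Real.rpow_nonneg ht0.le (-δ)
      positivity
    rw [mul_neg, abs_neg, abs_of_nonneg h1]
    ring
  have h_zero : Tendsto (u * v) (nhdsWithin 0 (Set.Ioi 0)) (nhds 0) := by
    have hg : Tendsto (fun t : ℝ => (M/δ) * t ^ (1-δ)) (nhdsWithin 0 (Set.Ioi 0)) (nhds 0) := by
      have h1 : Filter.Tendsto (fun t : ℝ => t ^ (1-δ)) (nhds 0) (nhds 0) := by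
        have := (Real.continuousAt_rpow_const 0 (1-δ) (Or.inr (by linarith))).tendsto
        rwa [Real.zero_rpow (by linarith : 1-δ ≠ 0)] at this
      simpa using ((h1.mono_left nhdsWithin_le_nhds).const_mul (M/δ))
    refine squeeze_zero_norm' ?_ hg
    · filter_upwards [self_mem_nhdsWithin] with t ht
      have ht0 : (0:ℝ) < t := ht
      rw [habs_uv t ht0]
      have hvnn : (0:ℝ) ≤ t ^ (-δ) := Real.rpow_nonneg ht0.le _
      calc u t * t ^ (-δ) / δ ≤ (M * t) * t ^ (-δ) / δ := by
            gcongr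
            exact key t ht0
        _ = (M/δ) * (t ^ (1:ℝ) * t ^ (-δ)) := by rw [Real.rpow_one]; ring
        _ = (M/δ) * t ^ (1-δ) := by rw [← Real.rpow_add ht0]; ring_nf
  have h_infty : Tendsto (u * v) atTop (nhds 0) := by
    have hg : Tendsto (fun t : ℝ => (1/δ) * t ^ (-δ)) atTop (nhds 0) := by
      simpa using ((tendsto_rpow_neg_atTop hδ0).const_mul (1/δ))
    refine squeeze_zero_norm' ?_ hg
    · filter_upwards [eventually_gt_atTop (0:ℝ)] with t ht0
      rw [habs_uv t ht0]
      have hvnn : (0:ℝ) ≤ t ^ (-δ) := Real.rpow_nonneg ht0.le _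
      calc u t * t ^ (-δ) / δ ≤ 1 * t ^ (-δ) / δ := by
            gcongr
            exact (hu01 t ht0).2
        _ = (1/δ) * t ^ (-δ) := by ring
  -- integration by parts
  have hibp := MeasureTheory.integral_Ioi_mul_deriv_eq_deriv_mul hu hv huv' hu'v h_zero h_infty
  -- compute the remaining (beta) integral
  have hBint : ∫ x in Set.Ioi (0:ℝ), u' x * v x
      = -(M/δ) * (Real.Gamma (1-δ) * Real.Gamma (M+δ) / Real.Gamma ((1-δ)+(M+δ))) := by
    rw [← betaIoi (1-δ) (M+δ) (by linarith) (by linarith), ← MeasureTheory.integral_const_mul]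
    refine MeasureTheory.setIntegral_congr_fun measurableSet_Ioi fun x hx => ?_
    have hx0 : (0:ℝ) < x := hx
    simp only [hu'_def, hv_def]
    rw [show ((1-δ)-1 : ℝ) = -δ by ring, show (-((1-δ)+(M+δ)) : ℝ) = -M-1 by ring]
    field_simp [hδ0.ne']
  have hgoal : ∫ t in Set.Ioi (0:ℝ), (1 - (1 + t) ^ (-M)) * t ^ (-δ - 1)
      = ∫ x in Set.Ioi (0:ℝ), u x * v' x := by
    refine MeasureTheory.setIntegral_congr_fun measurableSet_Ioi fun x hx => rfl
  rw [hgoal, hibp, hBint, show ((1-δ)+(M+δ) : ℝ) = M+1 by ring,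
    Real.Gamma_add_one hM.ne']
  have hΓM : Real.Gamma M ≠ 0 := (Real.Gamma_pos_of_pos hM).ne'
  field_simp
  ring
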